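/- arXiv:1712.08869 — 7 statements merged into one kernel-verified Lean document; each statement's English description precedes it below -/
import Mathlib

section
/- If x1, x2, x3, x4, x5 are natural numbers with x1 + x2 + x3 + x4 + x5 = n, then the product x1*x2*x3*x4*x5 is at most ∏_{i=0}^{4} ⌊(n+i)/5⌋. -/
lemma rhs_eq (q r : ℕ) (hr : r < 5) :
    ∏ i ∈ Finset.range 5, (5*q + r + i) / 5 = q^(5-r) * (q+1)^r := by
  have d : ∀ b : ℕ, (5*q + b) / 5 = q + b / 5 := fun b => by omega
  interval_cases r <;>
    simp [Finset.prod_range_succ, Nat.add_assoc, d] <;> ring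

lemma prod_step {a b : ℕ} (h : b + 2 ≤ a) : a * b ≤ (a-1)*(b+1) := by
  obtain ⟨c, rfl⟩ : ∃ c, a = b + 2 + c := ⟨a - b - 2, by omega⟩
  have : b + 2 + c - 1 = b + 1 + c := by omega
  rw [this]; nlinarith

lemma sq_step {a b : ℕ} (h : b + 2 ≤ a) :
    (a-1)*(a-1) + ((b+1)*(b+1) + 1) ≤ a*a + b*b := by
  obtain ⟨c, rfl⟩ : ∃ c, a = b + 2 + c := ⟨a - b - 2, by omega⟩
  have : b + 2 + c - 1 = b + 1 + c := by omega
  rw [this]; nlinarith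

/-- If five natural numbers sum to `n`, their product is at most
`∏_{i=0}^{4} ⌊(n+i)/5⌋`. -/
theorem product_le_balanced (n : ℕ) (x : Fin 5 → ℕ)
    (hsum : ∑ i, x i = n) :
    ∏ i, x i ≤ ∏ i ∈ Finset.range 5, (n + i) / 5 := by
  obtain ⟨k, hk⟩ : ∃ k, ∑ i, x i * x i ≤ k := ⟨_, le_rfl⟩
  induction k generalizing x with
  | zero =>
      have h0 : ∀ i : Fin 5, x i = 0 := by
        intro i
        have h1 := Finset.single_le_sum (f := fun i => x i * x i)
          (fun _ _ => Nat.zero_le _) (Finset.mem_univ i)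
        nlinarith
      simp [Fin.prod_univ_five, h0]
  | succ k ih =>
      by_cases hex : ∃ i j, x j + 2 ≤ x i
      · obtain ⟨i, j, hij⟩ := hex
        have hne : j ≠ i := by rintro rfl; omega
        set y : Fin 5 → ℕ :=
          fun t => if t = i then x i - 1 else if t = j then x j + 1 else x t with hy
        have hyi : y i = x i - 1 := by simp [hy]
        have hyj : y j = x j + 1 := by simp [hy, hne]
        have hmem : j ∈ Finset.univ.erase i := by simp [hne]
        have split : ∀ f : Fin 5 → ℕ,
            ∑ t, f t = f i + (f j + ∑ t ∈ (Finset.univ.erase i).erase j, f t) := by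
          intro f
          rw [← Finset.add_sum_erase _ f (Finset.mem_univ i),
            ← Finset.add_sum_erase _ f hmem]
        have splitp : ∀ f : Fin 5 → ℕ,
            ∏ t, f t = f i * (f j * ∏ t ∈ (Finset.univ.erase i).erase j, f t) := by
          intro f
          rw [← Finset.mul_prod_erase _ f (Finset.mem_univ i),
            ← Finset.mul_prod_erase _ f hmem]
        have hrestp :
            ∏ t ∈ (Finset.univ.erase i).erase j, y t
              = ∏ t ∈ (Finset.univ.erase i).erase j, x t := by
          refine Finset.prod_congr rfl fun t ht => ?_
          simp only [Finset.mem_erase] at ht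
          simp [hy, ht.1, ht.2.1]
        have hrest0 : ∑ t ∈ (Finset.univ.erase i).erase j, y t
              = ∑ t ∈ (Finset.univ.erase i).erase j, x t := by
          refine Finset.sum_congr rfl fun t ht => ?_
          simp only [Finset.mem_erase] at ht
          simp [hy, ht.1, ht.2.1]
        have hrest2 : ∑ t ∈ (Finset.univ.erase i).erase j, y t * y t
              = ∑ t ∈ (Finset.univ.erase i).erase j, x t * x t := by
          refine Finset.sum_congr rfl fun t ht => ?_
          simp only [Finset.mem_erase] at ht
          simp [hy, ht.1, ht.2.1]
        have hsy : ∑ t, y t = n := by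
          rw [split y, hyi, hyj, hrest0]
          rw [split x] at hsum
          omega
        have hky : ∑ t, y t * y t ≤ k := by
          have e1 : ∑ t, y t * y t
              = y i * y i + (y j * y j + ∑ t ∈ (Finset.univ.erase i).erase j, y t * y t) :=
            split _
          have e2 : ∑ t, x t * x t
              = x i * x i + (x j * x j + ∑ t ∈ (Finset.univ.erase i).erase j, x t * x t) :=
            split _
          rw [hyi, hyj] at e1
          have := sq_step hij
          rw [e2] at hk
          rw [e1, hrest2]
          omega
        have hprod : ∏ t, x t ≤ ∏ t, y t := by
          rw [splitp x, splitp y, hyi, hyj, hrestp, ← mul_assoc, ← mul_assoc]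
          exact Nat.mul_le_mul (prod_step hij) le_rfl
        exact hprod.trans (ih y hsy hky)
      · push_neg at hex
        have h2 : ∀ i j, x i ≤ x j + 1 := fun i j => by have := hex i j; omega
        obtain ⟨q, r, hn, hr5⟩ : ∃ q r, n = 5*q + r ∧ r < 5 := ⟨n/5, n%5, by omega, by omega⟩
        subst hn
        rw [rhs_eq q r hr5, Fin.prod_univ_five]
        rw [Fin.sum_univ_five] at hsum
        have a01 := h2 0 1; have a02 := h2 0 2; have a03 := h2 0 3; have a04 := h2 0 4
        have a10 := h2 1 0; have a12 := h2 1 2; have a13 := h2 1 3; have a14 := h2 1 4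
        have a20 := h2 2 0; have a21 := h2 2 1; have a23 := h2 2 3; have a24 := h2 2 4
        have a30 := h2 3 0; have a31 := h2 3 1; have a32 := h2 3 2; have a34 := h2 3 4
        have a40 := h2 4 0; have a41 := h2 4 1; have a42 := h2 4 2; have a43 := h2 4 3
        have h0 : x 0 = q ∨ x 0 = q + 1 := by omega
        have h1 : x 1 = q ∨ x 1 = q + 1 := by omega
        have h2' : x 2 = q ∨ x 2 = q + 1 := by omega
        have h3 : x 3 = q ∨ x 3 = q + 1 := by omega
        have h4 : x 4 = q ∨ x 4 = q + 1 := by omega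
        rcases h0 with h0|h0 <;> rcases h1 with h1|h1 <;> rcases h2' with h2'|h2' <;>
          rcases h3 with h3|h3 <;> rcases h4 with h4|h4 <;>
          rw [h0, h1, h2', h3, h4] <;>
          first
          | (have hc : r = 0 := (by omega); subst hc; refine le_of_eq ?_; ring1)
          | (have hc : r = 1 := (by omega); subst hc; refine le_of_eq ?_; ring1)
          | (have hc : r = 2 := (by omega); subst hc; refine le_of_eq ?_; ring1)
          | (have hc : r = 3 := (by omega); subst hc; refine le_of_eq ?_; ring1)
          | (have hc : r = 4 := (by omega); subst hc; refine le_of_eq ?_; ring1)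
          | (exfalso; omega)
end

section
/- If x1, x2, x3, x4, x5 are positive natural numbers with x1 + x2 + x3 + x4 + x5 = n and x1*x2*x3*x4*x5 = ∏_{i=0}^{4} ⌊(n+i)/5⌋, then |xi - xj| ≤ 1 for all i, j ∈ {1,...,5}. -/
private lemma aux_max (n : ℕ) : ∀ s a b c d e : ℕ, a*a+b*b+c*c+d*d+e*e = s →
    a+b+c+d+e = n → a*b*c*d*e ≤ ∏ i ∈ Finset.range 5, (n+i)/5 := by
  intro s
  induction s using Nat.strong_induction_on with
  | _ s IH =>
    intro a b c d e hsq hsum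
    subst hsq
    by_cases h1 : b + 2 ≤ a
    · obtain ⟨t, rfl⟩ : ∃ t, a = b + 2 + t := ⟨a - (b + 2), by omega⟩
      calc (b+2+t)*b*c*d*e = ((b+2+t)*b)*(c*d*e) := by ring
        _ ≤ ((b+1+t)*(b+1))*(c*d*e) := by
            have hh : (b+2+t)*b + 1 + t = (b+1+t)*(b+1) := by ring
            exact Nat.mul_le_mul (by omega) le_rfl
        _ = (b+1+t)*(b+1)*c*d*e := by ring
        _ ≤ ∏ i ∈ Finset.range 5, (n+i)/5 := by
            have hh : ((b+1+t)*(b+1+t)+(b+1)*(b+1)+c*c+d*d+e*e) + 2*t + 2 = (b+2+t)*(b+2+t)+b*b+c*c+d*d+e*e := by ring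
            exact IH ((b+1+t)*(b+1+t)+(b+1)*(b+1)+c*c+d*d+e*e) (by omega) (b+1+t) (b+1) c d e rfl (by omega)
    by_cases h2 : c + 2 ≤ a
    · obtain ⟨t, rfl⟩ : ∃ t, a = c + 2 + t := ⟨a - (c + 2), by omega⟩
      calc (c+2+t)*b*c*d*e = ((c+2+t)*c)*(b*d*e) := by ring
        _ ≤ ((c+1+t)*(c+1))*(b*d*e) := by
            have hh : (c+2+t)*c + 1 + t = (c+1+t)*(c+1) := by ring
            exact Nat.mul_le_mul (by omega) le_rfl
        _ = (c+1+t)*b*(c+1)*d*e := by ring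
        _ ≤ ∏ i ∈ Finset.range 5, (n+i)/5 := by
            have hh : ((c+1+t)*(c+1+t)+b*b+(c+1)*(c+1)+d*d+e*e) + 2*t + 2 = (c+2+t)*(c+2+t)+b*b+c*c+d*d+e*e := by ring
            exact IH ((c+1+t)*(c+1+t)+b*b+(c+1)*(c+1)+d*d+e*e) (by omega) (c+1+t) b (c+1) d e rfl (by omega)
    by_cases h3 : d + 2 ≤ a
    · obtain ⟨t, rfl⟩ : ∃ t, a = d + 2 + t := ⟨a - (d + 2), by omega⟩
      calc (d+2+t)*b*c*d*e = ((d+2+t)*d)*(b*c*e) := by ring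
        _ ≤ ((d+1+t)*(d+1))*(b*c*e) := by
            have hh : (d+2+t)*d + 1 + t = (d+1+t)*(d+1) := by ring
            exact Nat.mul_le_mul (by omega) le_rfl
        _ = (d+1+t)*b*c*(d+1)*e := by ring
        _ ≤ ∏ i ∈ Finset.range 5, (n+i)/5 := by
            have hh : ((d+1+t)*(d+1+t)+b*b+c*c+(d+1)*(d+1)+e*e) + 2*t + 2 = (d+2+t)*(d+2+t)+b*b+c*c+d*d+e*e := by ring
            exact IH ((d+1+t)*(d+1+t)+b*b+c*c+(d+1)*(d+1)+e*e) (by omega) (d+1+t) b c (d+1) e rfl (by omega)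
    by_cases h4 : e + 2 ≤ a
    · obtain ⟨t, rfl⟩ : ∃ t, a = e + 2 + t := ⟨a - (e + 2), by omega⟩
      calc (e+2+t)*b*c*d*e = ((e+2+t)*e)*(b*c*d) := by ring
        _ ≤ ((e+1+t)*(e+1))*(b*c*d) := by
            have hh : (e+2+t)*e + 1 + t = (e+1+t)*(e+1) := by ring
            exact Nat.mul_le_mul (by omega) le_rfl
        _ = (e+1+t)*b*c*d*(e+1) := by ring
        _ ≤ ∏ i ∈ Finset.range 5, (n+i)/5 := by
            have hh : ((e+1+t)*(e+1+t)+b*b+c*c+d*d+(e+1)*(e+1)) + 2*t + 2 = (e+2+t)*(e+2+t)+b*b+c*c+d*d+e*e := by ring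
            exact IH ((e+1+t)*(e+1+t)+b*b+c*c+d*d+(e+1)*(e+1)) (by omega) (e+1+t) b c d (e+1) rfl (by omega)
    by_cases h5 : a + 2 ≤ b
    · obtain ⟨t, rfl⟩ : ∃ t, b = a + 2 + t := ⟨b - (a + 2), by omega⟩
      calc a*(a+2+t)*c*d*e = ((a+2+t)*a)*(c*d*e) := by ring
        _ ≤ ((a+1+t)*(a+1))*(c*d*e) := by
            have hh : (a+2+t)*a + 1 + t = (a+1+t)*(a+1) := by ring
            exact Nat.mul_le_mul (by omega) le_rfl
        _ = (a+1)*(a+1+t)*c*d*e := by ring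
        _ ≤ ∏ i ∈ Finset.range 5, (n+i)/5 := by
            have hh : ((a+1)*(a+1)+(a+1+t)*(a+1+t)+c*c+d*d+e*e) + 2*t + 2 = a*a+(a+2+t)*(a+2+t)+c*c+d*d+e*e := by ring
            exact IH ((a+1)*(a+1)+(a+1+t)*(a+1+t)+c*c+d*d+e*e) (by omega) (a+1) (a+1+t) c d e rfl (by omega)
    by_cases h6 : c + 2 ≤ b
    · obtain ⟨t, rfl⟩ : ∃ t, b = c + 2 + t := ⟨b - (c + 2), by omega⟩
      calc a*(c+2+t)*c*d*e = ((c+2+t)*c)*(a*d*e) := by ring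
        _ ≤ ((c+1+t)*(c+1))*(a*d*e) := by
            have hh : (c+2+t)*c + 1 + t = (c+1+t)*(c+1) := by ring
            exact Nat.mul_le_mul (by omega) le_rfl
        _ = a*(c+1+t)*(c+1)*d*e := by ring
        _ ≤ ∏ i ∈ Finset.range 5, (n+i)/5 := by
            have hh : (a*a+(c+1+t)*(c+1+t)+(c+1)*(c+1)+d*d+e*e) + 2*t + 2 = a*a+(c+2+t)*(c+2+t)+c*c+d*d+e*e := by ring
            exact IH (a*a+(c+1+t)*(c+1+t)+(c+1)*(c+1)+d*d+e*e) (by omega) a (c+1+t) (c+1) d e rfl (by omega)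
    by_cases h7 : d + 2 ≤ b
    · obtain ⟨t, rfl⟩ : ∃ t, b = d + 2 + t := ⟨b - (d + 2), by omega⟩
      calc a*(d+2+t)*c*d*e = ((d+2+t)*d)*(a*c*e) := by ring
        _ ≤ ((d+1+t)*(d+1))*(a*c*e) := by
            have hh : (d+2+t)*d + 1 + t = (d+1+t)*(d+1) := by ring
            exact Nat.mul_le_mul (by omega) le_rfl
        _ = a*(d+1+t)*c*(d+1)*e := by ring
        _ ≤ ∏ i ∈ Finset.range 5, (n+i)/5 := by
            have hh : (a*a+(d+1+t)*(d+1+t)+c*c+(d+1)*(d+1)+e*e) + 2*t + 2 = a*a+(d+2+t)*(d+2+t)+c*c+d*d+e*e := by ring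
            exact IH (a*a+(d+1+t)*(d+1+t)+c*c+(d+1)*(d+1)+e*e) (by omega) a (d+1+t) c (d+1) e rfl (by omega)
    by_cases h8 : e + 2 ≤ b
    · obtain ⟨t, rfl⟩ : ∃ t, b = e + 2 + t := ⟨b - (e + 2), by omega⟩
      calc a*(e+2+t)*c*d*e = ((e+2+t)*e)*(a*c*d) := by ring
        _ ≤ ((e+1+t)*(e+1))*(a*c*d) := by
            have hh : (e+2+t)*e + 1 + t = (e+1+t)*(e+1) := by ring
            exact Nat.mul_le_mul (by omega) le_rfl
        _ = a*(e+1+t)*c*d*(e+1) := by ring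
        _ ≤ ∏ i ∈ Finset.range 5, (n+i)/5 := by
            have hh : (a*a+(e+1+t)*(e+1+t)+c*c+d*d+(e+1)*(e+1)) + 2*t + 2 = a*a+(e+2+t)*(e+2+t)+c*c+d*d+e*e := by ring
            exact IH (a*a+(e+1+t)*(e+1+t)+c*c+d*d+(e+1)*(e+1)) (by omega) a (e+1+t) c d (e+1) rfl (by omega)
    by_cases h9 : a + 2 ≤ c
    · obtain ⟨t, rfl⟩ : ∃ t, c = a + 2 + t := ⟨c - (a + 2), by omega⟩
      calc a*b*(a+2+t)*d*e = ((a+2+t)*a)*(b*d*e) := by ring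
        _ ≤ ((a+1+t)*(a+1))*(b*d*e) := by
            have hh : (a+2+t)*a + 1 + t = (a+1+t)*(a+1) := by ring
            exact Nat.mul_le_mul (by omega) le_rfl
        _ = (a+1)*b*(a+1+t)*d*e := by ring
        _ ≤ ∏ i ∈ Finset.range 5, (n+i)/5 := by
            have hh : ((a+1)*(a+1)+b*b+(a+1+t)*(a+1+t)+d*d+e*e) + 2*t + 2 = a*a+b*b+(a+2+t)*(a+2+t)+d*d+e*e := by ring
            exact IH ((a+1)*(a+1)+b*b+(a+1+t)*(a+1+t)+d*d+e*e) (by omega) (a+1) b (a+1+t) d e rfl (by omega)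
    by_cases h10 : b + 2 ≤ c
    · obtain ⟨t, rfl⟩ : ∃ t, c = b + 2 + t := ⟨c - (b + 2), by omega⟩
      calc a*b*(b+2+t)*d*e = ((b+2+t)*b)*(a*d*e) := by ring
        _ ≤ ((b+1+t)*(b+1))*(a*d*e) := by
            have hh : (b+2+t)*b + 1 + t = (b+1+t)*(b+1) := by ring
            exact Nat.mul_le_mul (by omega) le_rfl
        _ = a*(b+1)*(b+1+t)*d*e := by ring
        _ ≤ ∏ i ∈ Finset.range 5, (n+i)/5 := by
            have hh : (a*a+(b+1)*(b+1)+(b+1+t)*(b+1+t)+d*d+e*e) + 2*t + 2 = a*a+b*b+(b+2+t)*(b+2+t)+d*d+e*e := by ring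
            exact IH (a*a+(b+1)*(b+1)+(b+1+t)*(b+1+t)+d*d+e*e) (by omega) a (b+1) (b+1+t) d e rfl (by omega)
    by_cases h11 : d + 2 ≤ c
    · obtain ⟨t, rfl⟩ : ∃ t, c = d + 2 + t := ⟨c - (d + 2), by omega⟩
      calc a*b*(d+2+t)*d*e = ((d+2+t)*d)*(a*b*e) := by ring
        _ ≤ ((d+1+t)*(d+1))*(a*b*e) := by
            have hh : (d+2+t)*d + 1 + t = (d+1+t)*(d+1) := by ring
            exact Nat.mul_le_mul (by omega) le_rfl
        _ = a*b*(d+1+t)*(d+1)*e := by ring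
        _ ≤ ∏ i ∈ Finset.range 5, (n+i)/5 := by
            have hh : (a*a+b*b+(d+1+t)*(d+1+t)+(d+1)*(d+1)+e*e) + 2*t + 2 = a*a+b*b+(d+2+t)*(d+2+t)+d*d+e*e := by ring
            exact IH (a*a+b*b+(d+1+t)*(d+1+t)+(d+1)*(d+1)+e*e) (by omega) a b (d+1+t) (d+1) e rfl (by omega)
    by_cases h12 : e + 2 ≤ c
    · obtain ⟨t, rfl⟩ : ∃ t, c = e + 2 + t := ⟨c - (e + 2), by omega⟩
      calc a*b*(e+2+t)*d*e = ((e+2+t)*e)*(a*b*d) := by ring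
        _ ≤ ((e+1+t)*(e+1))*(a*b*d) := by
            have hh : (e+2+t)*e + 1 + t = (e+1+t)*(e+1) := by ring
            exact Nat.mul_le_mul (by omega) le_rfl
        _ = a*b*(e+1+t)*d*(e+1) := by ring
        _ ≤ ∏ i ∈ Finset.range 5, (n+i)/5 := by
            have hh : (a*a+b*b+(e+1+t)*(e+1+t)+d*d+(e+1)*(e+1)) + 2*t + 2 = a*a+b*b+(e+2+t)*(e+2+t)+d*d+e*e := by ring
            exact IH (a*a+b*b+(e+1+t)*(e+1+t)+d*d+(e+1)*(e+1)) (by omega) a b (e+1+t) d (e+1) rfl (by omega)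
    by_cases h13 : a + 2 ≤ d
    · obtain ⟨t, rfl⟩ : ∃ t, d = a + 2 + t := ⟨d - (a + 2), by omega⟩
      calc a*b*c*(a+2+t)*e = ((a+2+t)*a)*(b*c*e) := by ring
        _ ≤ ((a+1+t)*(a+1))*(b*c*e) := by
            have hh : (a+2+t)*a + 1 + t = (a+1+t)*(a+1) := by ring
            exact Nat.mul_le_mul (by omega) le_rfl
        _ = (a+1)*b*c*(a+1+t)*e := by ring
        _ ≤ ∏ i ∈ Finset.range 5, (n+i)/5 := by
            have hh : ((a+1)*(a+1)+b*b+c*c+(a+1+t)*(a+1+t)+e*e) + 2*t + 2 = a*a+b*b+c*c+(a+2+t)*(a+2+t)+e*e := by ring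
            exact IH ((a+1)*(a+1)+b*b+c*c+(a+1+t)*(a+1+t)+e*e) (by omega) (a+1) b c (a+1+t) e rfl (by omega)
    by_cases h14 : b + 2 ≤ d
    · obtain ⟨t, rfl⟩ : ∃ t, d = b + 2 + t := ⟨d - (b + 2), by omega⟩
      calc a*b*c*(b+2+t)*e = ((b+2+t)*b)*(a*c*e) := by ring
        _ ≤ ((b+1+t)*(b+1))*(a*c*e) := by
            have hh : (b+2+t)*b + 1 + t = (b+1+t)*(b+1) := by ring
            exact Nat.mul_le_mul (by omega) le_rfl
        _ = a*(b+1)*c*(b+1+t)*e := by ring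
        _ ≤ ∏ i ∈ Finset.range 5, (n+i)/5 := by
            have hh : (a*a+(b+1)*(b+1)+c*c+(b+1+t)*(b+1+t)+e*e) + 2*t + 2 = a*a+b*b+c*c+(b+2+t)*(b+2+t)+e*e := by ring
            exact IH (a*a+(b+1)*(b+1)+c*c+(b+1+t)*(b+1+t)+e*e) (by omega) a (b+1) c (b+1+t) e rfl (by omega)
    by_cases h15 : c + 2 ≤ d
    · obtain ⟨t, rfl⟩ : ∃ t, d = c + 2 + t := ⟨d - (c + 2), by omega⟩
      calc a*b*c*(c+2+t)*e = ((c+2+t)*c)*(a*b*e) := by ring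
        _ ≤ ((c+1+t)*(c+1))*(a*b*e) := by
            have hh : (c+2+t)*c + 1 + t = (c+1+t)*(c+1) := by ring
            exact Nat.mul_le_mul (by omega) le_rfl
        _ = a*b*(c+1)*(c+1+t)*e := by ring
        _ ≤ ∏ i ∈ Finset.range 5, (n+i)/5 := by
            have hh : (a*a+b*b+(c+1)*(c+1)+(c+1+t)*(c+1+t)+e*e) + 2*t + 2 = a*a+b*b+c*c+(c+2+t)*(c+2+t)+e*e := by ring
            exact IH (a*a+b*b+(c+1)*(c+1)+(c+1+t)*(c+1+t)+e*e) (by omega) a b (c+1) (c+1+t) e rfl (by omega)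
    by_cases h16 : e + 2 ≤ d
    · obtain ⟨t, rfl⟩ : ∃ t, d = e + 2 + t := ⟨d - (e + 2), by omega⟩
      calc a*b*c*(e+2+t)*e = ((e+2+t)*e)*(a*b*c) := by ring
        _ ≤ ((e+1+t)*(e+1))*(a*b*c) := by
            have hh : (e+2+t)*e + 1 + t = (e+1+t)*(e+1) := by ring
            exact Nat.mul_le_mul (by omega) le_rfl
        _ = a*b*c*(e+1+t)*(e+1) := by ring
        _ ≤ ∏ i ∈ Finset.range 5, (n+i)/5 := by
            have hh : (a*a+b*b+c*c+(e+1+t)*(e+1+t)+(e+1)*(e+1)) + 2*t + 2 = a*a+b*b+c*c+(e+2+t)*(e+2+t)+e*e := by ring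
            exact IH (a*a+b*b+c*c+(e+1+t)*(e+1+t)+(e+1)*(e+1)) (by omega) a b c (e+1+t) (e+1) rfl (by omega)
    by_cases h17 : a + 2 ≤ e
    · obtain ⟨t, rfl⟩ : ∃ t, e = a + 2 + t := ⟨e - (a + 2), by omega⟩
      calc a*b*c*d*(a+2+t) = ((a+2+t)*a)*(b*c*d) := by ring
        _ ≤ ((a+1+t)*(a+1))*(b*c*d) := by
            have hh : (a+2+t)*a + 1 + t = (a+1+t)*(a+1) := by ring
            exact Nat.mul_le_mul (by omega) le_rfl
        _ = (a+1)*b*c*d*(a+1+t) := by ring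
        _ ≤ ∏ i ∈ Finset.range 5, (n+i)/5 := by
            have hh : ((a+1)*(a+1)+b*b+c*c+d*d+(a+1+t)*(a+1+t)) + 2*t + 2 = a*a+b*b+c*c+d*d+(a+2+t)*(a+2+t) := by ring
            exact IH ((a+1)*(a+1)+b*b+c*c+d*d+(a+1+t)*(a+1+t)) (by omega) (a+1) b c d (a+1+t) rfl (by omega)
    by_cases h18 : b + 2 ≤ e
    · obtain ⟨t, rfl⟩ : ∃ t, e = b + 2 + t := ⟨e - (b + 2), by omega⟩
      calc a*b*c*d*(b+2+t) = ((b+2+t)*b)*(a*c*d) := by ring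
        _ ≤ ((b+1+t)*(b+1))*(a*c*d) := by
            have hh : (b+2+t)*b + 1 + t = (b+1+t)*(b+1) := by ring
            exact Nat.mul_le_mul (by omega) le_rfl
        _ = a*(b+1)*c*d*(b+1+t) := by ring
        _ ≤ ∏ i ∈ Finset.range 5, (n+i)/5 := by
            have hh : (a*a+(b+1)*(b+1)+c*c+d*d+(b+1+t)*(b+1+t)) + 2*t + 2 = a*a+b*b+c*c+d*d+(b+2+t)*(b+2+t) := by ring
            exact IH (a*a+(b+1)*(b+1)+c*c+d*d+(b+1+t)*(b+1+t)) (by omega) a (b+1) c d (b+1+t) rfl (by omega)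
    by_cases h19 : c + 2 ≤ e
    · obtain ⟨t, rfl⟩ : ∃ t, e = c + 2 + t := ⟨e - (c + 2), by omega⟩
      calc a*b*c*d*(c+2+t) = ((c+2+t)*c)*(a*b*d) := by ring
        _ ≤ ((c+1+t)*(c+1))*(a*b*d) := by
            have hh : (c+2+t)*c + 1 + t = (c+1+t)*(c+1) := by ring
            exact Nat.mul_le_mul (by omega) le_rfl
        _ = a*b*(c+1)*d*(c+1+t) := by ring
        _ ≤ ∏ i ∈ Finset.range 5, (n+i)/5 := by
            have hh : (a*a+b*b+(c+1)*(c+1)+d*d+(c+1+t)*(c+1+t)) + 2*t + 2 = a*a+b*b+c*c+d*d+(c+2+t)*(c+2+t) := by ring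
            exact IH (a*a+b*b+(c+1)*(c+1)+d*d+(c+1+t)*(c+1+t)) (by omega) a b (c+1) d (c+1+t) rfl (by omega)
    by_cases h20 : d + 2 ≤ e
    · obtain ⟨t, rfl⟩ : ∃ t, e = d + 2 + t := ⟨e - (d + 2), by omega⟩
      calc a*b*c*d*(d+2+t) = ((d+2+t)*d)*(a*b*c) := by ring
        _ ≤ ((d+1+t)*(d+1))*(a*b*c) := by
            have hh : (d+2+t)*d + 1 + t = (d+1+t)*(d+1) := by ring
            exact Nat.mul_le_mul (by omega) le_rfl
        _ = a*b*c*(d+1)*(d+1+t) := by ring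
        _ ≤ ∏ i ∈ Finset.range 5, (n+i)/5 := by
            have hh : (a*a+b*b+c*c+(d+1)*(d+1)+(d+1+t)*(d+1+t)) + 2*t + 2 = a*a+b*b+c*c+d*d+(d+2+t)*(d+2+t) := by ring
            exact IH (a*a+b*b+c*c+(d+1)*(d+1)+(d+1+t)*(d+1+t)) (by omega) a b c (d+1) (d+1+t) rfl (by omega)
    obtain ⟨q, r, hr, rfl⟩ : ∃ q r, r < 5 ∧ n = 5*q+r := ⟨n/5, n%5, by omega, by omega⟩
    interval_cases r <;>
      simp only [Finset.prod_range_succ, Finset.prod_range_zero, one_mul]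
    · rw [show (5*q+0+0)/5 = q from by omega, show (5*q+0+1)/5 = q from by omega, show (5*q+0+2)/5 = q from by omega, show (5*q+0+3)/5 = q from by omega, show (5*q+0+4)/5 = q from by omega]
      have hav : a = q ∨ a = q+1 := by omega
      have hbv : b = q ∨ b = q+1 := by omega
      have hcv : c = q ∨ c = q+1 := by omega
      have hdv : d = q ∨ d = q+1 := by omega
      have hev : e = q ∨ e = q+1 := by omega
      rcases hav with rfl|rfl <;> rcases hbv with rfl|rfl <;> rcases hcv with rfl|rfl <;>
          rcases hdv with rfl|rfl <;> rcases hev with rfl|rfl <;>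
          first
          | (exfalso; omega)
          | exact le_of_eq (by ring)
    · rw [show (5*q+1+0)/5 = q from by omega, show (5*q+1+1)/5 = q from by omega, show (5*q+1+2)/5 = q from by omega, show (5*q+1+3)/5 = q from by omega, show (5*q+1+4)/5 = q+1 from by omega]
      have hav : a = q ∨ a = q+1 := by omega
      have hbv : b = q ∨ b = q+1 := by omega
      have hcv : c = q ∨ c = q+1 := by omega
      have hdv : d = q ∨ d = q+1 := by omega
      have hev : e = q ∨ e = q+1 := by omega
      rcases hav with rfl|rfl <;> rcases hbv with rfl|rfl <;> rcases hcv with rfl|rfl <;>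
          rcases hdv with rfl|rfl <;> rcases hev with rfl|rfl <;>
          first
          | (exfalso; omega)
          | exact le_of_eq (by ring)
    · rw [show (5*q+2+0)/5 = q from by omega, show (5*q+2+1)/5 = q from by omega, show (5*q+2+2)/5 = q from by omega, show (5*q+2+3)/5 = q+1 from by omega, show (5*q+2+4)/5 = q+1 from by omega]
      have hav : a = q ∨ a = q+1 := by omega
      have hbv : b = q ∨ b = q+1 := by omega
      have hcv : c = q ∨ c = q+1 := by omega
      have hdv : d = q ∨ d = q+1 := by omega
      have hev : e = q ∨ e = q+1 := by omega
      rcases hav with rfl|rfl <;> rcases hbv with rfl|rfl <;> rcases hcv with rfl|rfl <;>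
          rcases hdv with rfl|rfl <;> rcases hev with rfl|rfl <;>
          first
          | (exfalso; omega)
          | exact le_of_eq (by ring)
    · rw [show (5*q+3+0)/5 = q from by omega, show (5*q+3+1)/5 = q from by omega, show (5*q+3+2)/5 = q+1 from by omega, show (5*q+3+3)/5 = q+1 from by omega, show (5*q+3+4)/5 = q+1 from by omega]
      have hav : a = q ∨ a = q+1 := by omega
      have hbv : b = q ∨ b = q+1 := by omega
      have hcv : c = q ∨ c = q+1 := by omega
      have hdv : d = q ∨ d = q+1 := by omega
      have hev : e = q ∨ e = q+1 := by omega
      rcases hav with rfl|rfl <;> rcases hbv with rfl|rfl <;> rcases hcv with rfl|rfl <;>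
          rcases hdv with rfl|rfl <;> rcases hev with rfl|rfl <;>
          first
          | (exfalso; omega)
          | exact le_of_eq (by ring)
    · rw [show (5*q+4+0)/5 = q from by omega, show (5*q+4+1)/5 = q+1 from by omega, show (5*q+4+2)/5 = q+1 from by omega, show (5*q+4+3)/5 = q+1 from by omega, show (5*q+4+4)/5 = q+1 from by omega]
      have hav : a = q ∨ a = q+1 := by omega
      have hbv : b = q ∨ b = q+1 := by omega
      have hcv : c = q ∨ c = q+1 := by omega
      have hdv : d = q ∨ d = q+1 := by omega
      have hev : e = q ∨ e = q+1 := by omega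
      rcases hav with rfl|rfl <;> rcases hbv with rfl|rfl <;> rcases hcv with rfl|rfl <;>
          rcases hdv with rfl|rfl <;> rcases hev with rfl|rfl <;>
          first
          | (exfalso; omega)
          | exact le_of_eq (by ring)

private lemma aux_pair (n a b c d e : ℕ) (hc : 0 < c) (hd : 0 < d) (he : 0 < e)
    (hsum : a + b + c + d + e = n)
    (hprod : a*b*c*d*e = ∏ i ∈ Finset.range 5, (n+i)/5) : a ≤ b + 1 := by
  by_contra hcon
  obtain ⟨t, rfl⟩ : ∃ t, a = b + 2 + t := ⟨a - (b + 2), by omega⟩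
  have h2 := aux_max n ((b+1+t)*(b+1+t)+(b+1)*(b+1)+c*c+d*d+e*e) (b+1+t) (b+1) c d e rfl (by omega)
  have h3 : (b+2+t)*b*c*d*e < (b+1+t)*(b+1)*c*d*e := by
    have hO : 0 < c*(d*e) := Nat.mul_pos hc (Nat.mul_pos hd he)
    calc (b+2+t)*b*c*d*e = ((b+2+t)*b)*(c*(d*e)) := by ring
      _ < ((b+1+t)*(b+1))*(c*(d*e)) := by
          refine Nat.mul_lt_mul_of_lt_of_le ?_ le_rfl hO
          have hh : (b+2+t)*b + 1 + t = (b+1+t)*(b+1) := by ring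
          omega
      _ = (b+1+t)*(b+1)*c*d*e := by ring
  rw [hprod] at h3
  exact absurd h2 (not_le.mpr h3)

/-- If five positive natural numbers sum to `n` and their product achieves the
maximum `∏_{i=0}^{4} ⌊(n+i)/5⌋`, then any two of them differ by at most `1`. -/
theorem balanced_of_product_eq (n : ℕ) (x : Fin 5 → ℕ)
    (hpos : ∀ i, 0 < x i)
    (hsum : ∑ i, x i = n)
    (hprod : ∏ i, x i = ∏ i ∈ Finset.range 5, (n + i) / 5) :
    ∀ i j, x i ≤ x j + 1 := by
  simp only [Fin.sum_univ_five] at hsum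
  simp only [Fin.prod_univ_five] at hprod
  intro i j
  fin_cases i <;> fin_cases j
  · omega
  · exact aux_pair n (x 0) (x 1) (x 2) (x 3) (x 4) (hpos 2) (hpos 3) (hpos 4) (by omega)
      (by rw [← hprod]; try ring)
  · exact aux_pair n (x 0) (x 2) (x 1) (x 3) (x 4) (hpos 1) (hpos 3) (hpos 4) (by omega)
      (by rw [← hprod]; try ring)
  · exact aux_pair n (x 0) (x 3) (x 1) (x 2) (x 4) (hpos 1) (hpos 2) (hpos 4) (by omega)
      (by rw [← hprod]; try ring)
  · exact aux_pair n (x 0) (x 4) (x 1) (x 2) (x 3) (hpos 1) (hpos 2) (hpos 3) (by omega)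
      (by rw [← hprod]; try ring)
  · exact aux_pair n (x 1) (x 0) (x 2) (x 3) (x 4) (hpos 2) (hpos 3) (hpos 4) (by omega)
      (by rw [← hprod]; try ring)
  · omega
  · exact aux_pair n (x 1) (x 2) (x 0) (x 3) (x 4) (hpos 0) (hpos 3) (hpos 4) (by omega)
      (by rw [← hprod]; try ring)
  · exact aux_pair n (x 1) (x 3) (x 0) (x 2) (x 4) (hpos 0) (hpos 2) (hpos 4) (by omega)
      (by rw [← hprod]; try ring)
  · exact aux_pair n (x 1) (x 4) (x 0) (x 2) (x 3) (hpos 0) (hpos 2) (hpos 3) (by omega)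
      (by rw [← hprod]; try ring)
  · exact aux_pair n (x 2) (x 0) (x 1) (x 3) (x 4) (hpos 1) (hpos 3) (hpos 4) (by omega)
      (by rw [← hprod]; try ring)
  · exact aux_pair n (x 2) (x 1) (x 0) (x 3) (x 4) (hpos 0) (hpos 3) (hpos 4) (by omega)
      (by rw [← hprod]; try ring)
  · omega
  · exact aux_pair n (x 2) (x 3) (x 0) (x 1) (x 4) (hpos 0) (hpos 1) (hpos 4) (by omega)
      (by rw [← hprod]; try ring)
  · exact aux_pair n (x 2) (x 4) (x 0) (x 1) (x 3) (hpos 0) (hpos 1) (hpos 3) (by omega)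
      (by rw [← hprod]; try ring)
  · exact aux_pair n (x 3) (x 0) (x 1) (x 2) (x 4) (hpos 1) (hpos 2) (hpos 4) (by omega)
      (by rw [← hprod]; try ring)
  · exact aux_pair n (x 3) (x 1) (x 0) (x 2) (x 4) (hpos 0) (hpos 2) (hpos 4) (by omega)
      (by rw [← hprod]; try ring)
  · exact aux_pair n (x 3) (x 2) (x 0) (x 1) (x 4) (hpos 0) (hpos 1) (hpos 4) (by omega)
      (by rw [← hprod]; try ring)
  · omega
  · exact aux_pair n (x 3) (x 4) (x 0) (x 1) (x 2) (hpos 0) (hpos 1) (hpos 2) (by omega)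
      (by rw [← hprod]; try ring)
  · exact aux_pair n (x 4) (x 0) (x 1) (x 2) (x 3) (hpos 1) (hpos 2) (hpos 3) (by omega)
      (by rw [← hprod]; try ring)
  · exact aux_pair n (x 4) (x 1) (x 0) (x 2) (x 3) (hpos 0) (hpos 2) (hpos 3) (by omega)
      (by rw [← hprod]; try ring)
  · exact aux_pair n (x 4) (x 2) (x 0) (x 1) (x 3) (hpos 0) (hpos 1) (hpos 3) (by omega)
      (by rw [← hprod]; try ring)
  · exact aux_pair n (x 4) (x 3) (x 0) (x 1) (x 2) (hpos 0) (hpos 1) (hpos 2) (by omega)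
      (by rw [← hprod]; try ring)
  · omega
end

section
/- For every natural number n ≥ 1, writing n ≡ i (mod 5) with 0 ≤ i ≤ 4, the rational number (5! * ((n+5-i)/5)^i * ((n-i)/5)^(5-i)) / n^5 is strictly greater than 0.0384 * (1 - 50/n²), where the divisions (n+5-i)/5 and (n-i)/5 are exact. -/
/-!
Write `n = 5q + i` with `0 ≤ i < 5`: the blow-up has `i` parts of size `q + 1` and `5 - i` parts
of size `q`, and `0.0384 = 5!/5⁵`. Clearing denominators, the claim becomes
`n⁵ - 50 n³ < 5⁵ (q+1)^i q^(5-i)`, and for each residue `i` the difference of the two sides is a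
polynomial in `q` with nonnegative coefficients (for `i = 0` it is `6250 q³`, positive as `q ≥ 1`).
-/

theorem Nat.cast_sub_mod_div_eq_div {K : Type*} [Field K] [CharZero K] (n d : ℕ) (hd : d ≠ 0) :
    ((n : K) - (n % d : ℕ)) / d = (n / d : ℕ) := by
  rw [div_eq_iff (by exact_mod_cast hd), sub_eq_iff_eq_add]
  exact_mod_cast (Nat.div_add_mod' n d).symm

theorem Nat.cast_add_sub_mod_div_eq_div_add_one {K : Type*} [Field K] [CharZero K] (n d : ℕ)
    (hd : d ≠ 0) : ((n : K) + d - (n % d : ℕ)) / d = (n / d : ℕ) + 1 := by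
  rw [← Nat.cast_sub_mod_div_eq_div n d hd, add_sub_right_comm, add_div,
    div_self (by exact_mod_cast hd)]

theorem pow_five_sub_fifty_mul_pow_three_lt (q i : ℕ) (hi : i < 5) (hpos : 0 < 5 * q + i) :
    ((5 * q + i : ℕ) : ℚ) ^ 5 - 50 * ((5 * q + i : ℕ) : ℚ) ^ 3 <
      5 ^ 5 * ((q : ℚ) + 1) ^ i * (q : ℚ) ^ (5 - i) := by
  rw [← sub_pos]
  push_cast
  interval_cases i
  · have : (0 : ℚ) < q := by exact_mod_cast (by omega : 0 < q)
    ring_nf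
    positivity
  all_goals ring_nf; positivity

/-- For `n ≥ 1` with `i = n mod 5`, the density of `C₅` in the balanced blow-up
of `C₅` on `n` vertices, namely `5! ((n+5-i)/5)^i ((n-i)/5)^(5-i) / n^5`,
is strictly greater than `0.0384 (1 - 50/n²)`. -/
theorem balanced_density_lower_bound (n : ℕ) (hn : 1 ≤ n) :
    (0.0384 : ℚ) * (1 - 50 / (n : ℚ) ^ 2) <
      ((Nat.factorial 5 : ℚ) * (((n : ℚ) + 5 - (n % 5 : ℕ)) / 5) ^ (n % 5)
          * (((n : ℚ) - (n % 5 : ℕ)) / 5) ^ (5 - n % 5)) / (n : ℚ) ^ 5 := by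
  have key := pow_five_sub_fifty_mul_pow_three_lt (n / 5) (n % 5) (Nat.mod_lt n (by norm_num))
    (by omega)
  rw [Nat.div_add_mod] at key
  have hup := Nat.cast_add_sub_mod_div_eq_div_add_one (K := ℚ) n 5 (by norm_num)
  have hdown := Nat.cast_sub_mod_div_eq_div (K := ℚ) n 5 (by norm_num)
  simp only [Nat.cast_ofNat] at hup hdown
  have hn0 : (0 : ℚ) < n := by exact_mod_cast hn
  rw [hup, hdown, lt_div_iff₀ (by positivity)]
  set q : ℚ := ((n / 5 : ℕ) : ℚ)
  calc (0.0384 : ℚ) * (1 - 50 / (n : ℚ) ^ 2) * (n : ℚ) ^ 5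
      = 120 / 5 ^ 5 * ((n : ℚ) ^ 5 - 50 * (n : ℚ) ^ 3) := by
        field_simp
        ring
    _ < 120 / 5 ^ 5 * (5 ^ 5 * (q + 1) ^ (n % 5) * q ^ (5 - n % 5)) := by gcongr
    _ = _ := by
        rw [Nat.factorial]
        field_simp
        ring
end

section
/- Let G be a triangle-free simple graph and let C = v1 v2 v3 v4 v5 v1 be a 5-cycle in G such that every vertex of G outside C has exactly two neighbors on C. Then the sets X_i = {v ∈ V(G) : N(v) ∩ V(C) = N(v_i) ∩ V(C)} for i = 1,...,5 (indices of the cycle) partition V(G), and each X_i is an independent set. -/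
/-!
The cycle is induced: two cycle vertices that are not consecutive have a common neighbour on
the cycle, so an edge between them would close a triangle. Likewise the two neighbours of an
outside vertex are non-consecutive on `C`, and in `C₅` every non-adjacent pair is the
neighbourhood of exactly one vertex. Each class `Xᵢ` is independent because all its members
are adjacent to `vᵢ₊₁`.
-/

open SimpleGraph

lemma cycleGraph_five_eq_of_adj_iff :
    ∀ i i' : Fin 5, (∀ j, (cycleGraph 5).Adj i j ↔ (cycleGraph 5).Adj i' j) → i = i' := by
  decide

lemma cycleGraph_five_exists_adj_iff_of_not_adj :
    ∀ a b : Fin 5, a ≠ b → ¬ (cycleGraph 5).Adj a b →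
      ∃ i, ∀ j, (j = a ∨ j = b) ↔ (cycleGraph 5).Adj i j := by
  decide

lemma SimpleGraph.CliqueFree.not_adj_of_adj_of_adj {V : Type*} {G : SimpleGraph V}
    (hTF : G.CliqueFree 3) {a b c : V} (hab : G.Adj a b) (hac : G.Adj a c) : ¬ G.Adj b c :=
  fun hbc => isIndepSet_neighborSet_of_triangleFree G hTF a hab hac hbc.ne hbc

section FiveCycle

variable {V : Type*} {G : SimpleGraph V} {v : Fin 5 → V}

lemma adj_of_cycleGraph_adj (hcyc : ∀ i : Fin 5, G.Adj (v i) (v (i + 1))) {i j : Fin 5}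
    (h : (cycleGraph 5).Adj i j) : G.Adj (v i) (v j) := by
  rcases cycleGraph_adj.mp h with h | h
  · rw [sub_eq_iff_eq_add'] at h
    exact h ▸ (hcyc j).symm
  · rw [sub_eq_iff_eq_add'] at h
    exact h ▸ hcyc i

lemma adj_iff_cycleGraph_adj (hTF : G.CliqueFree 3)
    (hcyc : ∀ i : Fin 5, G.Adj (v i) (v (i + 1))) (i j : Fin 5) :
    G.Adj (v i) (v j) ↔ (cycleGraph 5).Adj i j := by
  refine ⟨fun hij => ?_, adj_of_cycleGraph_adj hcyc⟩
  by_contra hC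
  have hne : i ≠ j := by
    rintro rfl
    exact G.irrefl hij
  obtain ⟨k, hk⟩ := cycleGraph_five_exists_adj_iff_of_not_adj i j hne hC
  have hki := adj_of_cycleGraph_adj hcyc ((hk i).mp (Or.inl rfl))
  have hkj := adj_of_cycleGraph_adj hcyc ((hk j).mp (Or.inr rfl))
  exact hTF.not_adj_of_adj_of_adj hki hkj hij

lemma exists_adj_iff_of_ncard_eq_two (hTF : G.CliqueFree 3)
    (hcyc : ∀ i : Fin 5, G.Adj (v i) (v (i + 1))) {u : V}
    (htwo : {j : Fin 5 | G.Adj u (v j)}.ncard = 2) :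
    ∃ i : Fin 5, ∀ j : Fin 5, G.Adj u (v j) ↔ G.Adj (v i) (v j) := by
  obtain ⟨a, b, hab, hS⟩ := Set.ncard_eq_two.mp htwo
  have hu : ∀ j, G.Adj u (v j) ↔ j = a ∨ j = b := fun j => by
    simpa using Set.ext_iff.mp hS j
  have hC : ¬ (cycleGraph 5).Adj a b := by
    rw [← adj_iff_cycleGraph_adj hTF hcyc]
    exact hTF.not_adj_of_adj_of_adj ((hu a).mpr (Or.inl rfl)) ((hu b).mpr (Or.inr rfl))
  obtain ⟨i, hi⟩ := cycleGraph_five_exists_adj_iff_of_not_adj a b hab hC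
  exact ⟨i, fun j => by rw [hu, hi, adj_iff_cycleGraph_adj hTF hcyc]⟩

end FiveCycle

theorem partition_into_classes_general {V : Type*} (G : SimpleGraph V)
    (hTF : G.CliqueFree 3)
    (v : Fin 5 → V)
    (hcyc : ∀ i : Fin 5, G.Adj (v i) (v (i + 1)))
    (htwo : ∀ u : V, u ∉ Set.range v → {j : Fin 5 | G.Adj u (v j)}.ncard = 2) :
    (∀ u : V, ∃! i : Fin 5, ∀ j : Fin 5, G.Adj u (v j) ↔ G.Adj (v i) (v j)) ∧
    (∀ i : Fin 5, ∀ u w : V,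
      (∀ j : Fin 5, G.Adj u (v j) ↔ G.Adj (v i) (v j)) →
      (∀ j : Fin 5, G.Adj w (v j) ↔ G.Adj (v i) (v j)) →
      ¬ G.Adj u w) := by
  have hC := adj_iff_cycleGraph_adj hTF hcyc
  refine ⟨fun u => ?_, fun i u w hu hw => ?_⟩
  · have hex : ∃ i : Fin 5, ∀ j, G.Adj u (v j) ↔ G.Adj (v i) (v j) := by
      by_cases hu : u ∈ Set.range v
      · obtain ⟨i, rfl⟩ := hu
        exact ⟨i, fun _ => Iff.rfl⟩
      · exact exists_adj_iff_of_ncard_eq_two hTF hcyc (htwo u hu)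
    obtain ⟨i, hi⟩ := hex
    refine ⟨i, hi, fun i' hi' => cycleGraph_five_eq_of_adj_iff i' i fun j => ?_⟩
    rw [← hC, ← hC, ← hi', hi]
  · have hu' := (hu (i + 1)).mpr (hcyc i)
    have hw' := (hw (i + 1)).mpr (hcyc i)
    exact hTF.not_adj_of_adj_of_adj hu'.symm hw'.symm

/-- If `G` is triangle-free, `C = v₀v₁v₂v₃v₄` is a 5-cycle in `G`, and every
vertex outside `C` has exactly two neighbors on `C`, then the sets
`Xᵢ = {u : N(u) ∩ V(C) = N(vᵢ) ∩ V(C)}` partition `V(G)` and each `Xᵢ` is an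
independent set. -/
theorem partition_into_classes {V : Type*} (G : SimpleGraph V)
    (hTF : G.CliqueFree 3)
    (v : Fin 5 → V) (hinj : Function.Injective v)
    (hcyc : ∀ i : Fin 5, G.Adj (v i) (v (i + 1)))
    (htwo : ∀ u : V, u ∉ Set.range v → {j : Fin 5 | G.Adj u (v j)}.ncard = 2) :
    (∀ u : V, ∃! i : Fin 5, ∀ j : Fin 5, G.Adj u (v j) ↔ G.Adj (v i) (v j)) ∧
    (∀ i : Fin 5, ∀ u w : V,
      (∀ j : Fin 5, G.Adj u (v j) ↔ G.Adj (v i) (v j)) →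
      (∀ j : Fin 5, G.Adj w (v j) ↔ G.Adj (v i) (v j)) →
      ¬ G.Adj u w) :=
  partition_into_classes_general G hTF v hcyc htwo
end

section
/- The blow-up of the 5-cycle with parts of sizes x1, x2, x3, x4, x5 is triangle-free, and the number of 5-cycles (as subgraphs, i.e., unlabeled copies of C5) it contains is exactly x1*x2*x3*x4*x5. -/
/-- The number of (unlabeled) copies of `C₅` in a graph: the number of
5-element vertex subsets inducing a 5-cycle. -/
noncomputable def c5Count {V : Type*} [Fintype V] (G : SimpleGraph V) : ℕ :=
  Set.ncard {s : Finset V | s.card = 5 ∧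
    Nonempty (G.induce (s : Set V) ≃g SimpleGraph.cycleGraph 5)}

/-- The blow-up of `C₅` along a part-assignment `f : V → Fin 5`: edges exactly
between consecutive parts (indices mod 5). -/
def blowupC5 {V : Type*} (f : V → Fin 5) : SimpleGraph V where
  Adj u w := f w = f u + 1 ∨ f u = f w + 1
  symm := ⟨fun _ _ h => h.symm⟩
  loopless := ⟨fun u h => by
    rcases h with h | h <;> · rw [left_eq_add] at h; exact one_ne_zero h⟩

/-!
Adjacency in the blow-up is pulled back from `C₅` along the part map `f`, so `f` is a
homomorphism onto the triangle-free graph `C₅`. A vertex set `s` induces `C₅` exactly when `f`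
maps `s` bijectively onto the parts: distinct vertices of `C₅` have distinct neighbourhoods,
whereas two vertices of `s` in the same part have the same neighbourhood in `s`. These
transversals correspond to the choices of one vertex in each part, so there are `∏ xᵢ` of them.
-/

open SimpleGraph Finset Function

namespace SimpleGraph

variable {U V W : Type*} {G : SimpleGraph V} {H : SimpleGraph W}

theorem CliqueFree.of_hom {n : ℕ} (φ : G →g H) (h : H.CliqueFree n) : G.CliqueFree n := by
  rw [cliqueFree_iff] at h ⊢
  exact ⟨fun c => h.false <| (φ.comp c.toHom).toCopy (Hom.injective_of_top_hom _)⟩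

theorem Iso.injective_adj (φ : G ≃g H) (hH : Injective H.Adj) : Injective G.Adj := by
  intro a b hab
  refine φ.injective (hH (funext fun c => ?_))
  rw [← φ.apply_symm_apply c, φ.map_adj_iff, φ.map_adj_iff, hab]

/-- `Injective H.Adj` says that `H` has no twins, whereas vertices identified by `g` are twins
in `H.comap g`. -/
theorem nonempty_comap_iso_self_iff [Finite W] (hH : Injective H.Adj) (g : U → W) :
    Nonempty (H.comap g ≃g H) ↔ Bijective g := by
  refine ⟨fun ⟨φ⟩ => ?_, fun hg => ⟨⟨Equiv.ofBijective g hg, Iff.rfl⟩⟩⟩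
  have hg : Injective g := fun a b hab =>
    φ.injective_adj hH (funext fun c => by simp only [comap_adj, hab])
  exact hg.bijective_of_nat_card_le (Nat.card_congr φ.toEquiv).ge

theorem cycleGraph_five_adj_injective : Injective (cycleGraph 5).Adj := by
  have : ∀ a b : Fin 5, (∀ c, (cycleGraph 5).Adj a c ↔ (cycleGraph 5).Adj b c) → a = b := by
    decide
  exact fun a b h => this a b fun c => by rw [h]

theorem cycleGraph_five_cliqueFree_three : (cycleGraph 5).CliqueFree 3 := by
  have : ∀ a b c : Fin 5, (cycleGraph 5).Adj a b → (cycleGraph 5).Adj a c →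
      ¬ (cycleGraph 5).Adj b c := by
    decide
  intro t ht
  obtain ⟨a, b, c, hab, hac, hbc, -⟩ := is3Clique_iff.mp ht
  exact this a b c hab hac hbc

end SimpleGraph

theorem blowupC5_eq_comap {V : Type*} (f : V → Fin 5) :
    blowupC5 f = (cycleGraph 5).comap f := by
  have : ∀ a b : Fin 5, (b = a + 1 ∨ a = b + 1) ↔ (cycleGraph 5).Adj a b := by decide
  ext u v
  exact this (f u) (f v)

theorem blowupC5_cliqueFree_three {V : Type*} (f : V → Fin 5) : (blowupC5 f).CliqueFree 3 :=
  cycleGraph_five_cliqueFree_three.of_hom ⟨f, fun h => by rwa [blowupC5_eq_comap] at h⟩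

theorem ncard_setOf_bijective_domRestrict {V ι : Type*} [Fintype V] [Fintype ι] [DecidableEq ι]
    (f : V → ι) :
    {s : Finset V | Bijective ((s : Set V).domRestrict f)}.ncard = ∏ i, #{v | f v = i} := by
  classical
  let transversal (g : ∀ i, {v // f v = i}) : Finset V := univ.image fun i => (g i : V)
  have mem_transversal (g : ∀ i, {v // f v = i}) (v : V) : v ∈ transversal g ↔ v = g (f v) := by
    simp only [transversal, mem_image, mem_univ, true_and]
    exact ⟨fun ⟨i, hi⟩ => by subst hi; rw [(g i).2], fun h => ⟨f v, h.symm⟩⟩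
  have transversal_injective : Injective transversal := by
    intro g g' h
    funext i
    have := (mem_transversal g' _).mp (h ▸ (mem_transversal g _).mpr (by rw [(g i).2]))
    rw [(g i).2] at this
    exact Subtype.ext this
  have range_transversal :
      Set.range transversal = {s : Finset V | Bijective ((s : Set V).domRestrict f)} := by
    ext s
    refine ⟨?_, fun hs => ?_⟩
    · rintro ⟨g, rfl⟩
      refine ⟨fun ⟨u, hu⟩ ⟨v, hv⟩ huv => ?_, fun i => ⟨⟨g i, ?_⟩, (g i).2⟩⟩
      · rw [mem_coe, mem_transversal] at hu hv
        change f u = f v at huv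
        exact Subtype.ext (hu.trans (huv ▸ hv.symm))
      · rw [mem_coe, mem_transversal, (g i).2]
    · let e := Equiv.ofBijective _ hs
      refine ⟨fun i => ⟨e.symm i, e.apply_symm_apply i⟩, ?_⟩
      ext v
      rw [mem_transversal]
      refine ⟨fun h => h ▸ (e.symm (f v)).2, fun hv => ?_⟩
      exact (congrArg Subtype.val (e.symm_apply_apply ⟨v, hv⟩)).symm
  rw [← range_transversal, Set.ncard_range_of_injective transversal_injective, Nat.card_pi]
  simp [Fintype.card_subtype]

theorem c5Count_blowupC5 {V : Type*} [Fintype V] (f : V → Fin 5) :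
    c5Count (blowupC5 f) = ∏ i, #{v | f v = i} := by
  rw [← ncard_setOf_bijective_domRestrict, c5Count, blowupC5_eq_comap]
  congr 1
  ext s
  rw [Set.mem_ofPred_eq, Set.mem_ofPred_eq, induce, comap_comap,
    nonempty_comap_iso_self_iff cycleGraph_five_adj_injective]
  refine and_iff_right_of_imp fun h => ?_
  simpa using Fintype.card_of_bijective h

/-- The blow-up of `C₅` with parts of sizes `x₀,…,x₄` is triangle-free and
contains exactly `x₀·x₁·x₂·x₃·x₄` copies of `C₅`. -/
theorem blowup_triangle_free_and_c5_count (x : Fin 5 → ℕ) :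
    (blowupC5 (Sigma.fst : ((i : Fin 5) × Fin (x i)) → Fin 5)).CliqueFree 3 ∧
    c5Count (blowupC5 (Sigma.fst : ((i : Fin 5) × Fin (x i)) → Fin 5)) =
      ∏ i, x i := by
  refine ⟨blowupC5_cliqueFree_three _, ?_⟩
  rw [c5Count_blowupC5]
  congr 1 with i
  rw [← Fintype.card_subtype, Fintype.card_congr (Equiv.sigmaSubtype i), Fintype.card_fin]
end

section
/- The Möbius ladder ML_8 (the 8-cycle v1...v8 together with the four diagonals v_i v_{i+4}) is triangle-free and contains exactly 8 copies of the 5-cycle, which equals the number of 5-cycles in the balanced blow-up of C5 on 8 vertices (with part sizes 2,2,2,1,1). -/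
/-- The Möbius ladder `ML₈`: the 8-cycle together with the four main
diagonals. -/
def mobiusLadder8 : SimpleGraph (Fin 8) where
  Adj i j := j = i + 1 ∨ i = j + 1 ∨ j = i + 4
  symm := ⟨fun i j => by fin_cases i <;> fin_cases j <;> decide⟩
  loopless := ⟨fun i => by fin_cases i <;> decide⟩

instance : DecidableRel mobiusLadder8.Adj := fun i j =>
  inferInstanceAs (Decidable (j = i + 1 ∨ i = j + 1 ∨ j = i + 4))

instance {V : Type*} (f : V → Fin 5) : DecidableRel (blowupC5 f).Adj := fun u w =>
  inferInstanceAs (Decidable (f w = f u + 1 ∨ f u = f w + 1))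

open Finset

namespace SimpleGraph

variable {V W : Type*} {G : SimpleGraph V}

theorem degree_induce_eq_card_filter [DecidableEq V] [DecidableRel G.Adj] (s : Finset V)
    (v : (s : Set V)) [Fintype ((G.induce (s : Set V)).neighborSet v)] :
    (G.induce (s : Set V)).degree v = #{w ∈ s | G.Adj v w} := by
  rw [← card_neighborSet_eq_degree, ← Nat.card_eq_fintype_card, neighborSet_induce,
    ← Nat.card_eq_finsetCard]
  exact Nat.card_congr ((Equiv.subtypeSubtypeEquivSubtypeInter (· ∈ (s : Set V)) (G.Adj v)).trans
    (Equiv.subtypeEquivRight fun _ => mem_filter.symm))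

theorem card_filter_adj_eq_two_of_induce_iso_cycleGraph [DecidableEq V] [DecidableRel G.Adj]
    {n : ℕ} {s : Finset V} (e : G.induce (s : Set V) ≃g cycleGraph (n + 3)) {v : V}
    (hv : v ∈ s) : #{w ∈ s | G.Adj v w} = 2 := by
  classical
  rw [← degree_induce_eq_card_filter s ⟨v, hv⟩, ← e.degree_eq]
  exact cycleGraph_degree_three_le

theorem nonempty_induce_image_iso [Fintype W] [DecidableEq V] {H : SimpleGraph W} (f : H ↪g G) :
    Nonempty (G.induce (univ.image f : Finset V) ≃g H) := by
  rw [coe_image, coe_univ, Set.image_univ]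
  exact ⟨f.isoInduceRange.symm⟩

end SimpleGraph

open SimpleGraph

theorem c5Count_eq_card {V ι : Type*} [Fintype V] [DecidableEq V] {G : SimpleGraph V}
    [DecidableRel G.Adj] (c : ι → Fin 5 → V)
    (hc : ∀ t, Function.Injective (c t) ∧ ∀ i j, G.Adj (c t i) (c t j) ↔ (cycleGraph 5).Adj i j)
    (hinj : Function.Injective fun t => univ.image (c t))
    (hcover : ∀ s : Finset V, #s = 5 → (∀ v ∈ s, #{w ∈ s | G.Adj v w} = 2) →
      ∃ t, univ.image (c t) = s) :
    c5Count G = Nat.card ι := by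
  rw [c5Count, ← Set.ncard_range_of_injective hinj]
  congr 1
  ext s
  constructor
  · rintro ⟨hcard, ⟨e⟩⟩
    exact hcover s hcard fun v hv => card_filter_adj_eq_two_of_induce_iso_cycleGraph e hv
  · rintro ⟨t, rfl⟩
    obtain ⟨hinj, hadj⟩ := hc t
    exact ⟨by rw [card_image_of_injective _ hinj, card_fin],
      nonempty_induce_image_iso ⟨⟨c t, hinj⟩, hadj _ _⟩⟩

def mobiusLadder8Cycle (k : Fin 8) : Fin 5 → Fin 8 := fun i => k + i.castLE (by norm_num)

def blowupC5Cycle : Fin 2 × Fin 2 × Fin 2 → Fin 5 → Fin 8 := fun ⟨a, b, d⟩ =>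
  ![a.castLE (by norm_num), 2 + b.castLE (by norm_num), 4 + d.castLE (by norm_num), 6, 7]

set_option maxRecDepth 4000 in
theorem mobiusLadder8_cliqueFree_three : mobiusLadder8.CliqueFree 3 := by
  unfold CliqueFree
  decide

set_option maxRecDepth 4000 in
theorem c5Count_mobiusLadder8 : c5Count mobiusLadder8 = 8 := by
  rw [c5Count_eq_card mobiusLadder8Cycle (by decide) (by decide) (by decide), Nat.card_fin]

set_option maxRecDepth 4000 in
theorem c5Count_blowupC5_s8 : c5Count (blowupC5 (![0, 0, 1, 1, 2, 2, 3, 4] : Fin 8 → Fin 5)) = 8 := by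
  rw [c5Count_eq_card blowupC5Cycle (by decide) (by decide) (by decide), Nat.card_eq_fintype_card]
  rfl

/-- `ML₈` is triangle-free and has exactly `8` copies of `C₅`, the same number
as the balanced blow-up of `C₅` on 8 vertices (part sizes 2,2,2,1,1). -/
theorem mobiusLadder8_triangle_free_and_c5 :
    mobiusLadder8.CliqueFree 3 ∧
    c5Count mobiusLadder8 = 8 ∧
    c5Count (blowupC5 (![0, 0, 1, 1, 2, 2, 3, 4] : Fin 8 → Fin 5)) = 8 :=
  ⟨mobiusLadder8_cliqueFree_three, c5Count_mobiusLadder8, c5Count_blowupC5_s8⟩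
end

section
/- For every real number d with 0.034 ≤ d ≤ 0.0384 and every natural number n with 10 ≤ n < 100, let d_n = 5! ∏_{i=0}^{4} ⌊(n+i)/5⌋ / n^5; if d_n ≥ 0.034 and d ≥ d_n, then (4.57771*(d - 0.034) + 0.095058) / (3d) > 1 - 1/n. -/
set_option maxHeartbeats 4000000 in
/-- Finite verification step for `10 ≤ n < 100`: with
`dₙ = 5! ∏_{i<5} ⌊(n+i)/5⌋ / n⁵`, if `0.034 ≤ d ≤ 0.0384`, `d ≥ dₙ` and
`dₙ ≥ 0.034`, then `(4.57771 (d - 0.034) + 0.095058)/(3d) > 1 - 1/n`. -/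
theorem arithmetic_step_small_n (n : ℕ) (hn₁ : 10 ≤ n) (hn₂ : n < 100)
    (d : ℝ) (hd₁ : 0.034 ≤ d) (hd₂ : d ≤ 0.0384)
    (hdn : ((Nat.factorial 5 * ∏ i ∈ Finset.range 5, (n + i) / 5 : ℕ) : ℝ)
        / (n : ℝ) ^ 5 ≤ d)
    (hdn034 : (0.034 : ℝ) ≤
      ((Nat.factorial 5 * ∏ i ∈ Finset.range 5, (n + i) / 5 : ℕ) : ℝ)
        / (n : ℝ) ^ 5) :
    (4.57771 * (d - 0.034) + 0.095058) / (3 * d) > 1 - 1 / (n : ℝ) := by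
  have hd0 : (0:ℝ) < 3 * d := by linarith
  rw [gt_iff_lt, lt_div_iff₀ hd0]
  interval_cases n <;>
    norm_num [Finset.prod_range_succ, Nat.factorial] at hdn ⊢ <;>
    linarith
end
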